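/- A countable graph G lies in the Schmidt closure of the class 𝒲 if and only if G contains no comb all of whose teeth lie in V*(G). -/

import Mathlib

open Cardinal

/-- The set of vertices of infinite degree in `G`. -/
def Vinf {V : Type*} (G : SimpleGraph V) : Set V := {v : V | (G.neighborSet v).Infinite}

/-- The set of vertices of infinite degree having only finitely many neighbours of infinite
degree. -/
def Vstar {V : Type*} (G : SimpleGraph V) : Set V :=
  {v : V | (G.neighborSet v).Infinite ∧ (G.neighborSet v ∩ Vinf G).Finite}

/-- `G` contains a comb with all teeth in `A`: a ray `r` together with infinitely many pairwise
disjoint finite paths, the `n`-th path going from the vertex `r (k n)` of the ray to a tooth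
`t n ∈ A`, each path meeting the ray exactly in its first vertex. -/
def HasCombWithTeethIn {V : Type*} (G : SimpleGraph V) (A : Set V) : Prop :=
  ∃ (r : ℕ → V) (k : ℕ → ℕ) (t : ℕ → V) (p : ∀ n : ℕ, G.Walk (r (k n)) (t n)),
    Function.Injective r ∧ (∀ n : ℕ, G.Adj (r n) (r (n + 1))) ∧
    StrictMono k ∧ (∀ n : ℕ, t n ∈ A) ∧ (∀ n : ℕ, (p n).IsPath) ∧
    (∀ m n : ℕ, m ≠ n → ∀ v : V, v ∈ (p m).support → v ∉ (p n).support) ∧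
    (∀ n : ℕ, ∀ v ∈ (p n).support, (∃ i : ℕ, v = r i) → v = r (k n))

universe u

/-- A class of graphs: a predicate on simple graphs over arbitrary vertex types in universe `u`. -/
def GraphClass : Type (u + 1) := ∀ (V : Type u), SimpleGraph V → Prop

/-- The component graph: the subgraph of `G` induced by a connected component `C` of `G - S`. -/
def CompGraph {V : Type u} (G : SimpleGraph V) (S : Set V)
    (C : (G.induce Sᶜ).ConnectedComponent) : SimpleGraph C.supp :=
  (G.induce Sᶜ).induce C.supp

/-- The Schmidt hierarchy: `SchmidtLevel 𝒰 0 = 𝒰`, and for `μ > 0` a graph `G` lies in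
`SchmidtLevel 𝒰 μ` iff there is a finite vertex set `S` such that every component of `G - S`
lies in `SchmidtLevel 𝒰 lam` for some `lam < μ`. -/
noncomputable def SchmidtLevel (𝒰 : GraphClass.{u}) (μ : Ordinal.{u}) : GraphClass.{u} :=
  fun V G =>
    if μ = 0 then 𝒰 V G
    else ∃ S : Set V, S.Finite ∧
      ∀ C : (G.induce Sᶜ).ConnectedComponent,
        ∃ lam : Ordinal.{u}, ∃ _ : lam < μ, SchmidtLevel 𝒰 lam C.supp (CompGraph G S C)
  termination_by μ
  decreasing_by exact ‹_›

/-- A graph belongs to the Schmidt closure of `𝒰` if it lies in some level of the hierarchy. -/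
def InSchmidtClosure (𝒰 : GraphClass.{u}) {V : Type u} (G : SimpleGraph V) : Prop :=
  ∃ μ : Ordinal.{u}, SchmidtLevel 𝒰 μ V G

/-- The rank of a graph in the Schmidt closure: the least level containing it. -/
noncomputable def SchmidtRank (𝒰 : GraphClass.{u}) {V : Type u} (G : SimpleGraph V) :
    Ordinal.{u} :=
  sInf {μ : Ordinal.{u} | SchmidtLevel 𝒰 μ V G}

/-- The class 𝒲 of countable graphs `G` with `Vstar G` finite. -/
def Wclass : GraphClass.{u} := fun V G => Countable V ∧ (Vstar G).Finite

/-! A comb with teeth in `V*(G)` survives the deletion of a finite vertex set `S`: a tail of its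
ray and all but finitely many of its paths avoid `S`, hence lie in a single component `C` of
`G - S`; and since `C` has only finitely many neighbours outside, `V*(G[C]) = V*(G) ∩ C`. By
induction on the level, no graph of the closure contains such a comb; at level `0` its infinitely
many distinct teeth contradict the finiteness of `V*(G)`.

Conversely, let `G` be outside the closure. We keep a connected vertex set `W` with finitely many
outside neighbours such that `G[W]` is outside the closure. As `G[W]` is not in `𝒲`, the set
`V*(G[W]) = V*(G) ∩ W` is infinite; pick `t` in it and join the current end of the ray to `t` by a
path `τ` in `W`. Some component `U` of `G[W] - τ` is again outside the closure, and an edge `yz`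
joins `τ` to `U`. The part of `τ` up to `y`, followed by `yz`, extends the ray into `U`; the rest
of `τ` is the next tooth path. -/

open SimpleGraph Set

lemma finite_preimage_val_iff_of_subset_union {α : Type*} {W F s : Set α} (hF : F.Finite)
    (hs : s ⊆ W ∪ F) : (Subtype.val ⁻¹' s : Set W).Finite ↔ s.Finite := by
  rw [← finite_image_iff Subtype.val_injective.injOn, Subtype.image_preimage_coe]
  exact ⟨fun h => (h.union hF).subset fun x hx => (hs hx).imp (fun hW => ⟨hW, hx⟩) id,
    fun h => h.subset inter_subset_right⟩

namespace SimpleGraph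

section Maps

variable {V W : Type*} {G : SimpleGraph V} {H : SimpleGraph W}

def Iso.induceCongr (e : G ≃g H) {s : Set V} {t : Set W} (h : ∀ v, v ∈ s ↔ e v ∈ t) :
    G.induce s ≃g H.induce t where
  toEquiv := e.toEquiv.subtypeEquiv h
  map_rel_iff' := e.map_adj_iff

variable (G) in
noncomputable def induceInduceIso (s : Set V) (t : Set s) :
    (G.induce s).induce t ≃g G.induce (Subtype.val '' t) where
  toEquiv := Equiv.Set.image Subtype.val t Subtype.val_injective
  map_rel_iff' := Iff.rfl

lemma Iso.mem_vinf_iff (e : G ≃g H) {v : V} : e v ∈ Vinf H ↔ v ∈ Vinf G := by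
  simp only [Vinf, mem_ofPred_eq, ← e.image_neighborSet, infinite_image_iff e.injective.injOn]

lemma Iso.mem_vstar_iff (e : G ≃g H) {v : V} : e v ∈ Vstar H ↔ v ∈ Vstar G := by
  have hVinf : e ⁻¹' Vinf H = Vinf G := ext fun _ => e.mem_vinf_iff
  simp only [Vstar, mem_ofPred_eq, ← e.image_neighborSet, infinite_image_iff e.injective.injOn,
    ← image_inter_preimage, hVinf, finite_image_iff e.injective.injOn]

end Maps

variable {V : Type*} {G : SimpleGraph V}

section Walks

lemma Walk.reachable_of_mem_support {u v w : V} {p : G.Walk u v} (hw : w ∈ p.support) :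
    G.Reachable u w :=
  let ⟨q, _, _⟩ := Walk.mem_support_iff_exists_append.1 hw
  q.reachable

lemma Walk.isPath_induce_iff {s : Set V} {u v : V} (p : G.Walk u v)
    (hp : ∀ x ∈ p.support, x ∈ s) : (p.induce s hp).IsPath ↔ p.IsPath := by
  conv_rhs => rw [← p.map_induce hp]
  exact (Walk.isPath_map_iff_of_injective Subtype.val_injective).symm

lemma Walk.IsPath.append {u v w : V} {p : G.Walk u v} {q : G.Walk v w} (hp : p.IsPath)
    (hq : q.IsPath) (h : ∀ x ∈ p.support, x ∈ q.support → x = v) : (p.append q).IsPath := by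
  have hq' := hq.support_nodup
  rw [← q.cons_tail_support, List.nodup_cons] at hq'
  rw [Walk.isPath_def, Walk.support_append]
  refine hp.support_nodup.append hq'.2 (List.disjoint_left.2 fun x hxp hxq => ?_)
  rw [h x hxp (q.cons_tail_support ▸ List.mem_cons_of_mem v hxq)] at hxq
  exact hq'.1 hxq

lemma Walk.mem_support_of_mem_support_append {W : Set V} {u v w : V} {p : G.Walk u v}
    {q : G.Walk v w} (hp : ∀ x ∈ p.support, x ∈ W → x = v) {x : V}
    (hx : x ∈ (p.append q).support) (hxW : x ∈ W) : x ∈ q.support := by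
  rcases (Walk.mem_support_append_iff p q).1 hx with hxp | hxq
  · exact hp x hxp hxW ▸ q.start_mem_support
  · exact hxq

lemma exists_isPath_of_preconnected_induce {W : Set V} (hW : (G.induce W).Preconnected)
    {x y : V} (hx : x ∈ W) (hy : y ∈ W) :
    ∃ p : G.Walk x y, p.IsPath ∧ ∀ v ∈ p.support, v ∈ W := by
  classical
  obtain ⟨p⟩ := hW ⟨x, hx⟩ ⟨y, hy⟩
  refine ⟨p.bypass.map (Embedding.induce (G := G) W).toHom,
    p.bypass_isPath.map (Embedding.induce (G := G) W).injective, fun v hv => ?_⟩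
  obtain ⟨v', -, rfl⟩ := List.mem_map.1 ((Walk.support_map _ _) ▸ hv)
  exact v'.2

lemma exists_adj_of_preconnected_induce {W T U : Set V} (hW : (G.induce W).Preconnected)
    (hUW : U ⊆ W \ T) (hU : ∀ v ∈ U, ∀ u ∈ W \ T, G.Adj v u → u ∈ U) (hUne : U.Nonempty)
    {x : V} (hxW : x ∈ W) (hxT : x ∈ T) : ∃ y ∈ T, ∃ z ∈ U, G.Adj y z := by
  obtain ⟨u, hu⟩ := hUne
  obtain ⟨ρ, -, hρW⟩ := exists_isPath_of_preconnected_induce hW (hUW hu).1 hxW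
  obtain ⟨⟨⟨z, y⟩, hzy⟩, hd, hzU, hyU⟩ := ρ.exists_boundary_dart U hu fun hx => (hUW hx).2 hxT
  refine ⟨y, by_contra fun hyT => hyU (hU z hzU y ⟨?_, hyT⟩ hzy), z, hzU, hzy.symm⟩
  exact hρW y (ρ.dart_snd_mem_support_of_mem_darts hd)

end Walks

def OuterBoundarySubset (G : SimpleGraph V) (W F : Set V) : Prop :=
  ∀ v ∈ W, G.neighborSet v ⊆ W ∪ F

lemma outerBoundarySubset_compl (G : SimpleGraph V) (S : Set V) : G.OuterBoundarySubset Sᶜ S :=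
  fun _ _ => by rw [compl_union_self]; exact subset_univ _

lemma ConnectedComponent.outerBoundarySubset_supp (C : G.ConnectedComponent) :
    G.OuterBoundarySubset C.supp ∅ :=
  fun _ hv _ hadj => Or.inl ((C.mem_supp_congr_adj hadj).1 hv)

namespace OuterBoundarySubset

variable {W F : Set V}

lemma of_subset_closed {T U : Set V} (hW : G.OuterBoundarySubset W F) (hUW : U ⊆ W)
    (hU : ∀ v ∈ U, ∀ u ∈ W \ T, G.Adj v u → u ∈ U) : G.OuterBoundarySubset U (F ∪ T) :=
  fun v hv u hadj => by
    rcases hW v (hUW hv) hadj with huW | huF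
    · by_cases huT : u ∈ T
      · exact Or.inr (Or.inr huT)
      · exact Or.inl (hU v hv u ⟨huW, huT⟩ hadj)
    · exact Or.inr (Or.inl huF)

lemma mem_vinf_induce_iff (hW : G.OuterBoundarySubset W F) (hF : F.Finite) (x : W) :
    x ∈ Vinf (G.induce W) ↔ (x : V) ∈ Vinf G := by
  simp only [Vinf, mem_ofPred_eq, neighborSet_induce, Set.Infinite,
    finite_preimage_val_iff_of_subset_union hF (hW x x.2)]

lemma mem_vstar_induce_iff (hW : G.OuterBoundarySubset W F) (hF : F.Finite) (x : W) :
    x ∈ Vstar (G.induce W) ↔ (x : V) ∈ Vstar G := by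
  have hVinf : Vinf (G.induce W) = Subtype.val ⁻¹' Vinf G := ext (hW.mem_vinf_induce_iff hF)
  have hsub : G.neighborSet x ∩ Vinf G ⊆ W ∪ F := inter_subset_left.trans (hW x x.2)
  simp only [Vstar, mem_ofPred_eq, neighborSet_induce, hVinf, ← preimage_inter, Set.Infinite,
    finite_preimage_val_iff_of_subset_union hF (hW x x.2),
    finite_preimage_val_iff_of_subset_union hF hsub]

end OuterBoundarySubset

end SimpleGraph

def GraphClass.IsIsoInvariant (𝒰 : GraphClass.{u}) : Prop :=
  ∀ ⦃V W : Type u⦄ ⦃G : SimpleGraph V⦄ ⦃H : SimpleGraph W⦄, G ≃g H → 𝒰 V G → 𝒰 W H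

lemma wclass_isIsoInvariant : Wclass.{u}.IsIsoInvariant := by
  rintro V W G H e ⟨_, hfin⟩
  refine ⟨e.symm.injective.countable, (hfin.image e).subset fun w hw => ?_⟩
  exact ⟨e.symm w, by rwa [← e.mem_vstar_iff, e.apply_symm_apply], e.apply_symm_apply w⟩

section SchmidtLevel

variable {𝒰 : GraphClass.{u}} {μ : Ordinal.{u}} {V : Type u} {G : SimpleGraph V}

lemma schmidtLevel_zero : SchmidtLevel 𝒰 0 V G ↔ 𝒰 V G := by
  rw [SchmidtLevel, if_pos rfl]

lemma schmidtLevel_iff_of_ne_zero (hμ : μ ≠ 0) :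
    SchmidtLevel 𝒰 μ V G ↔ ∃ S : Set V, S.Finite ∧ ∀ C : (G.induce Sᶜ).ConnectedComponent,
      ∃ lam < μ, SchmidtLevel 𝒰 lam C.supp (CompGraph G S C) := by
  rw [SchmidtLevel, if_neg hμ]
  simp only [exists_prop]

lemma GraphClass.IsIsoInvariant.schmidtLevel (h𝒰 : 𝒰.IsIsoInvariant) (μ : Ordinal.{u}) :
    (SchmidtLevel 𝒰 μ).IsIsoInvariant := by
  induction μ using WellFoundedLT.induction with
  | ind μ IH =>
  intro V W G H e hG
  rcases eq_or_ne μ 0 with rfl | hμ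
  · exact schmidtLevel_zero.2 (h𝒰 e (schmidtLevel_zero.1 hG))
  obtain ⟨S, hS, hcomp⟩ := (schmidtLevel_iff_of_ne_zero hμ).1 hG
  refine (schmidtLevel_iff_of_ne_zero hμ).2 ⟨e '' S, hS.image e, fun C' => ?_⟩
  let Φ : G.induce Sᶜ ≃g H.induce (e '' S)ᶜ :=
    e.induceCongr fun v => by simp only [mem_compl_iff, e.injective.mem_set_image]
  obtain ⟨lam, hlam, hC⟩ := hcomp (Φ.connectedComponentEquiv.symm C')
  refine ⟨lam, hlam, IH lam hlam (Φ.induceCongr fun x => ?_) hC⟩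
  conv_rhs => rw [← Φ.connectedComponentEquiv.apply_symm_apply C']
  exact ConnectedComponent.iso_image_comp_eq_map_iff_eq_comp.symm

lemma InSchmidtClosure.of_iso (h𝒰 : 𝒰.IsIsoInvariant) {W : Type u} {H : SimpleGraph W}
    (e : G ≃g H) (hG : InSchmidtClosure 𝒰 G) : InSchmidtClosure 𝒰 H :=
  let ⟨μ, hμ⟩ := hG
  ⟨μ, h𝒰.schmidtLevel μ e hμ⟩

lemma inSchmidtClosure_of_forall_component {S : Set V} (hS : S.Finite)
    (h : ∀ C : (G.induce Sᶜ).ConnectedComponent, InSchmidtClosure 𝒰 (CompGraph G S C)) :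
    InSchmidtClosure 𝒰 G := by
  choose μ hμ using h
  refine ⟨Order.succ (⨆ C, μ C), (schmidtLevel_iff_of_ne_zero (Order.succ_ne_bot _)).2
    ⟨S, hS, fun C => ⟨μ C, ?_, hμ C⟩⟩⟩
  exact Order.lt_succ_iff.2 (le_ciSup Ordinal.bddAbove_of_small C)

end SchmidtLevel

section NotInClosure

variable {V : Type u} {G : SimpleGraph V} {W F T : Set V}

lemma infinite_inter_vstar_of_not_inSchmidtClosure [Countable V]
    (hW : G.OuterBoundarySubset W F) (hF : F.Finite)
    (h : ¬ InSchmidtClosure Wclass (G.induce W)) : (W ∩ Vstar G).Infinite :=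
  fun hfin => h ⟨0, schmidtLevel_zero.2 ⟨inferInstance,
    (hfin.preimage Subtype.val_injective.injOn).subset
      fun x hx => ⟨x.2, (hW.mem_vstar_induce_iff hF x).1 hx⟩⟩⟩

lemma exists_connected_not_inSchmidtClosure (h : ¬ InSchmidtClosure Wclass (G.induce W))
    (hT : T.Finite) :
    ∃ U ⊆ W \ T, (G.induce U).Connected ∧ (∀ v ∈ U, ∀ u ∈ W \ T, G.Adj v u → u ∈ U) ∧
      ¬ InSchmidtClosure Wclass (G.induce U) := by
  by_contra! hU
  let S : Set W := Subtype.val ⁻¹' T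
  refine h (inSchmidtClosure_of_forall_component (S := S)
    (hT.preimage Subtype.val_injective.injOn) fun C => ?_)
  let e : CompGraph (G.induce W) S C ≃g G.induce (Subtype.val '' (Subtype.val '' C.supp)) :=
    ((G.induce W).induceInduceIso Sᶜ C.supp).trans (G.induceInduceIso W _)
  refine .of_iso wclass_isIsoInvariant e.symm
    (hU _ ?_ (e.connected_iff.1 C.connected_toSimpleGraph) ?_)
  · rintro _ ⟨_, ⟨⟨⟨v, hvW⟩, hvT⟩, -, rfl⟩, rfl⟩
    exact ⟨hvW, hvT⟩
  · rintro _ ⟨_, ⟨⟨⟨v, hvW⟩, hvT⟩, hvC, rfl⟩, rfl⟩ u ⟨huW, huT⟩ hadj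
    have hadj' : ((G.induce W).induce Sᶜ).Adj ⟨⟨v, hvW⟩, hvT⟩ ⟨⟨u, huW⟩, huT⟩ := hadj
    exact ⟨⟨u, huW⟩, ⟨⟨⟨u, huW⟩, huT⟩, (C.mem_supp_congr_adj hadj').1 hvC, rfl⟩, rfl⟩

end NotInClosure

namespace SimpleGraph

variable {V : Type*} {G : SimpleGraph V}

structure Comb (G : SimpleGraph V) (A : Set V) where
  ray : ℕ → V
  foot : ℕ → ℕ
  tooth : ℕ → V
  path : ∀ n, G.Walk (ray (foot n)) (tooth n)
  ray_injective : Function.Injective ray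
  ray_adj : ∀ n, G.Adj (ray n) (ray (n + 1))
  foot_strictMono : StrictMono foot
  tooth_mem : ∀ n, tooth n ∈ A
  path_isPath : ∀ n, (path n).IsPath
  path_disjoint : ∀ m n, m ≠ n → ∀ v ∈ (path m).support, v ∉ (path n).support
  path_inter_ray : ∀ n, ∀ v ∈ (path n).support, (∃ i, v = ray i) → v = ray (foot n)

lemma hasCombWithTeethIn_iff {A : Set V} : HasCombWithTeethIn G A ↔ Nonempty (G.Comb A) :=
  ⟨fun ⟨r, k, t, p, h₁, h₂, h₃, h₄, h₅, h₆, h₇⟩ => ⟨⟨r, k, t, p, h₁, h₂, h₃, h₄, h₅, h₆, h₇⟩⟩,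
    fun ⟨c⟩ => ⟨c.ray, c.foot, c.tooth, c.path, c.ray_injective, c.ray_adj, c.foot_strictMono,
      c.tooth_mem, c.path_isPath, c.path_disjoint, c.path_inter_ray⟩⟩

namespace Comb

variable {A B S : Set V}

lemma tooth_injective (c : G.Comb A) : Function.Injective c.tooth := fun m n h => by
  by_contra hmn
  refine c.path_disjoint m n hmn _ (c.path m).end_mem_support ?_
  rw [h]
  exact (c.path n).end_mem_support

lemma infinite (c : G.Comb A) : A.Infinite :=
  infinite_of_injective_forall_mem c.tooth_injective c.tooth_mem

def mono (c : G.Comb A) (h : A ⊆ B) : G.Comb B :=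
  { c with tooth_mem := fun n => h (c.tooth_mem n) }

def dropTeeth (c : G.Comb A) (M : ℕ) : G.Comb A where
  ray := c.ray
  foot n := c.foot (M + n)
  tooth n := c.tooth (M + n)
  path n := c.path (M + n)
  ray_injective := c.ray_injective
  ray_adj := c.ray_adj
  foot_strictMono _ _ h := c.foot_strictMono (Nat.add_lt_add_left h M)
  tooth_mem _ := c.tooth_mem _
  path_isPath _ := c.path_isPath _
  path_disjoint _ _ h := c.path_disjoint _ _ (by omega)
  path_inter_ray _ := c.path_inter_ray _

lemma add_foot_sub (c : G.Comb A) {N : ℕ} (hN : N ≤ c.foot 0) (n : ℕ) :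
    N + (c.foot n - N) = c.foot n :=
  Nat.add_sub_cancel' (hN.trans (c.foot_strictMono.monotone (Nat.zero_le n)))

def dropRay (c : G.Comb A) (N : ℕ) (hN : N ≤ c.foot 0) : G.Comb A where
  ray i := c.ray (N + i)
  foot n := c.foot n - N
  tooth := c.tooth
  path n := (c.path n).copy (by rw [c.add_foot_sub hN]) rfl
  ray_injective _ _ h := Nat.add_left_cancel (c.ray_injective h)
  ray_adj i := c.ray_adj (N + i)
  foot_strictMono a b h := by
    have := c.foot_strictMono h
    have := c.add_foot_sub hN a
    have := c.add_foot_sub hN b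
    show c.foot a - N < c.foot b - N
    omega
  tooth_mem := c.tooth_mem
  path_isPath n := by simpa only [Walk.isPath_copy] using c.path_isPath n
  path_disjoint m n h := by simpa only [Walk.support_copy] using c.path_disjoint m n h
  path_inter_ray n v hv := fun ⟨i, hi⟩ => by
    rw [Walk.support_copy] at hv
    rw [c.path_inter_ray n v hv ⟨N + i, hi⟩, c.add_foot_sub hN]

def induce (c : G.Comb A) (W : Set V) (hray : ∀ i, c.ray i ∈ W)
    (hpath : ∀ n, ∀ v ∈ (c.path n).support, v ∈ W) :
    (G.induce W).Comb (Subtype.val ⁻¹' A) where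
  ray i := ⟨c.ray i, hray i⟩
  foot := c.foot
  tooth n := ⟨c.tooth n, hpath n _ (c.path n).end_mem_support⟩
  path n := (c.path n).induce W (hpath n)
  ray_injective _ _ h := c.ray_injective (congrArg Subtype.val h)
  ray_adj := c.ray_adj
  foot_strictMono := c.foot_strictMono
  tooth_mem := c.tooth_mem
  path_isPath n := (Walk.isPath_induce_iff _ _).2 (c.path_isPath n)
  path_disjoint m n h v := by
    simpa only [Walk.support_induce, List.mem_attachWith] using c.path_disjoint m n h v
  path_inter_ray n v hv := fun ⟨i, hi⟩ => by
    rw [Walk.support_induce, List.mem_attachWith] at hv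
    exact Subtype.ext (c.path_inter_ray n v hv ⟨i, congrArg Subtype.val hi⟩)

lemma reachable_ray (c : G.Comb A) (i : ℕ) : G.Reachable (c.ray 0) (c.ray i) := by
  induction i with
  | zero => rfl
  | succ i ih => exact ih.trans (c.ray_adj i).reachable

lemma reachable_of_mem_path (c : G.Comb A) {n : ℕ} {v : V} (hv : v ∈ (c.path n).support) :
    G.Reachable (c.ray 0) v :=
  (c.reachable_ray _).trans (Walk.reachable_of_mem_support hv)

lemma exists_avoiding (c : G.Comb A) (hS : S.Finite) :
    ∃ c' : G.Comb A, (∀ i, c'.ray i ∈ Sᶜ) ∧ ∀ n, ∀ v ∈ (c'.path n).support, v ∈ Sᶜ := by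
  have hray : ∀ᶠ i in Filter.atTop, c.ray i ∉ S := by
    rw [← Nat.cofinite_eq_atTop]
    exact (hS.preimage c.ray_injective.injOn).eventually_cofinite_notMem
  have hpath : ∀ᶠ n in Filter.atTop, ∀ v ∈ (c.path n).support, v ∉ S := by
    have hmeet : {n | ∃ v ∈ S, v ∈ (c.path n).support}.Finite := by
      refine (hS.biUnion fun v _ => Subsingleton.finite (s := {n | v ∈ (c.path n).support}) ?_
        ).subset fun n ⟨v, hvS, hv⟩ => mem_biUnion hvS hv
      exact fun m hm n hn => by_contra fun h => c.path_disjoint m n h v hm hn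
    rw [← Nat.cofinite_eq_atTop]
    filter_upwards [hmeet.eventually_cofinite_notMem] with n hn v hv hvS using hn ⟨v, hvS, hv⟩
  obtain ⟨N, hN⟩ := Filter.eventually_atTop.1 hray
  obtain ⟨M, hM⟩ := Filter.eventually_atTop.1 hpath
  have hfoot : N ≤ (c.dropTeeth (max M N)).foot 0 :=
    (le_max_right M N).trans c.foot_strictMono.le_apply
  refine ⟨(c.dropTeeth (max M N)).dropRay N hfoot, fun i => hN _ (Nat.le_add_right N i),
    fun n v hv => hM (max M N + n) (by omega) v ?_⟩
  simpa [Comb.dropRay, Comb.dropTeeth] using hv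

end Comb

end SimpleGraph

section NoComb

variable {V : Type u} {G : SimpleGraph V} {A S : Set V}

lemma SimpleGraph.Comb.exists_comb_compGraph (c : G.Comb A) (hS : S.Finite) :
    ∃ C : (G.induce Sᶜ).ConnectedComponent,
      Nonempty ((CompGraph G S C).Comb {x | (x : V) ∈ A}) := by
  obtain ⟨c', hray, hpath⟩ := c.exists_avoiding hS
  let c'' := c'.induce Sᶜ hray hpath
  exact ⟨_, ⟨c''.induce _ (fun i => ConnectedComponent.eq.2 (c''.reachable_ray i).symm)
    fun n v hv => ConnectedComponent.eq.2 (c''.reachable_of_mem_path hv).symm⟩⟩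

lemma mem_vstar_compGraph_iff (hS : S.Finite) (C : (G.induce Sᶜ).ConnectedComponent)
    (x : C.supp) : x ∈ Vstar (CompGraph G S C) ↔ (x : V) ∈ Vstar G :=
  (C.outerBoundarySubset_supp.mem_vstar_induce_iff finite_empty x).trans
    ((G.outerBoundarySubset_compl S).mem_vstar_induce_iff hS x)

theorem isEmpty_comb_vstar_of_schmidtLevel_wclass (μ : Ordinal.{u}) :
    ∀ {V : Type u} {G : SimpleGraph V}, SchmidtLevel Wclass μ V G →
      IsEmpty (G.Comb (Vstar G)) := by
  induction μ using WellFoundedLT.induction with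
  | ind μ IH =>
  intro V G hG
  refine ⟨fun c => ?_⟩
  rcases eq_or_ne μ 0 with rfl | hμ
  · exact c.infinite (schmidtLevel_zero.1 hG).2
  obtain ⟨S, hS, hcomp⟩ := (schmidtLevel_iff_of_ne_zero hμ).1 hG
  obtain ⟨C, ⟨c'⟩⟩ := c.exists_comb_compGraph hS
  obtain ⟨lam, hlam, hC⟩ := hcomp C
  exact (IH lam hlam hC).false (c'.mono fun x hx => (mem_vstar_compGraph_iff hS C x).2 hx)

end NoComb

section CombConstruction

variable {V : Type u} {G : SimpleGraph V} {v₀ : V}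

/-- `spine` is the part of the ray built so far; the rest of the comb is still to be found inside
`W`, which `spine` meets only in its last vertex `x`. -/
structure CombStage (G : SimpleGraph V) (v₀ : V) where
  W : Set V
  F : Set V
  x : V
  spine : G.Walk v₀ x
  finite_F : F.Finite
  outerBoundarySubset : G.OuterBoundarySubset W F
  preconnected : (G.induce W).Preconnected
  not_inSchmidtClosure : ¬ InSchmidtClosure Wclass (G.induce W)
  x_mem : x ∈ W
  spine_isPath : spine.IsPath
  eq_of_mem_spine : ∀ v ∈ spine.support, v ∈ W → v = x

structure CombStage.Step (s : CombStage G v₀) where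
  next : CombStage G v₀
  y : V
  tooth : V
  segment : G.Walk s.x y
  adj : G.Adj y next.x
  path : G.Walk y tooth
  spine_eq : next.spine = (s.spine.append segment).concat adj
  segment_subset : ∀ v ∈ segment.support, v ∈ s.W
  W_subset : next.W ⊆ s.W
  tooth_mem : tooth ∈ Vstar G
  path_isPath : path.IsPath
  path_subset : ∀ v ∈ path.support, v ∈ s.W
  path_disjoint : ∀ v ∈ path.support, v ∉ next.W
  path_inter_spine : ∀ v ∈ path.support, v ∈ next.spine.support → v = y

namespace CombStage

lemma Step.mem_W_of_mem_extension {s : CombStage G v₀} (d : s.Step) {v : V}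
    (hv : v ∈ (d.segment.concat d.adj).support) : v ∈ s.W := by
  rw [Walk.support_concat, List.mem_append, List.mem_singleton] at hv
  rcases hv with hv | rfl
  · exact d.segment_subset v hv
  · exact d.W_subset d.next.x_mem

variable (s : CombStage G v₀) {y z : V} {τ : G.Walk s.x y}

lemma mem_support_extension (hyz : G.Adj y z) {v : V}
    (hv : v ∈ ((s.spine.append τ).concat hyz).support) (hvW : v ∈ s.W) :
    v ∈ τ.support ∨ v = z := by
  rw [Walk.support_concat, List.mem_append, List.mem_singleton] at hv
  exact hv.imp_left fun hv => Walk.mem_support_of_mem_support_append s.eq_of_mem_spine hv hvW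

lemma isPath_extension (hτ : τ.IsPath) (hτW : ∀ v ∈ τ.support, v ∈ s.W) (hzW : z ∈ s.W)
    (hzτ : z ∉ τ.support) (hyz : G.Adj y z) : ((s.spine.append τ).concat hyz).IsPath := by
  refine (s.spine_isPath.append hτ fun v hv hvτ => s.eq_of_mem_spine v hv (hτW v hvτ)).concat
    (fun hz => hzτ ?_) hyz
  exact Walk.mem_support_of_mem_support_append s.eq_of_mem_spine hz hzW

variable [Countable V]

lemma nonempty_step : Nonempty s.Step := by
  obtain ⟨t, htW, htV⟩ := (infinite_inter_vstar_of_not_inSchmidtClosure s.outerBoundarySubset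
    s.finite_F s.not_inSchmidtClosure).nonempty
  obtain ⟨τ, hτ, hτW⟩ := exists_isPath_of_preconnected_induce s.preconnected s.x_mem htW
  obtain ⟨U, hUsub, hUconn, hUclosed, hUbad⟩ :=
    exists_connected_not_inSchmidtClosure s.not_inSchmidtClosure τ.support.finite_toSet
  obtain ⟨y, hyτ, z, hzU, hyz⟩ := exists_adj_of_preconnected_induce s.preconnected hUsub
    hUclosed (nonempty_coe_sort.1 hUconn.nonempty) s.x_mem τ.start_mem_support
  obtain ⟨τ₁, τ₂, hτ₁, hτ₂, rfl⟩ := hτ.mem_support_iff_exists_append.1 hyτ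
  have hτ₁τ : ∀ v ∈ τ₁.support, v ∈ (τ₁.append τ₂).support :=
    fun v hv => (Walk.mem_support_append_iff _ _).2 (Or.inl hv)
  have hτ₂τ : ∀ v ∈ τ₂.support, v ∈ (τ₁.append τ₂).support :=
    fun v hv => (Walk.mem_support_append_iff _ _).2 (Or.inr hv)
  have hτ₁₂ : ∀ v ∈ τ₁.support, v ∈ τ₂.support → v = y := fun v hv₁ hv₂ =>
    by_contra fun hvy => hτ.ne_of_mem_support_of_append hvy hv₁ hv₂ rfl
  let next : CombStage G v₀ :=
    { W := U
      F := s.F ∪ {v | v ∈ (τ₁.append τ₂).support}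
      x := z
      spine := (s.spine.append τ₁).concat hyz
      finite_F := s.finite_F.union (List.finite_toSet _)
      outerBoundarySubset :=
        s.outerBoundarySubset.of_subset_closed (fun v hv => (hUsub hv).1) hUclosed
      preconnected := hUconn.preconnected
      not_inSchmidtClosure := hUbad
      x_mem := hzU
      spine_isPath := s.isPath_extension hτ₁ (fun v hv => hτW v (hτ₁τ v hv)) (hUsub hzU).1
        (fun hz => (hUsub hzU).2 (hτ₁τ z hz)) hyz
      eq_of_mem_spine := fun v hv hvU =>
        (s.mem_support_extension hyz hv (hUsub hvU).1).resolve_left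
          fun hvτ => (hUsub hvU).2 (hτ₁τ v hvτ) }
  refine ⟨{ next := next
            y := y
            tooth := t
            segment := τ₁
            adj := hyz
            path := τ₂
            spine_eq := rfl
            segment_subset := fun v hv => hτW v (hτ₁τ v hv)
            W_subset := fun v hv => (hUsub hv).1
            tooth_mem := htV
            path_isPath := hτ₂
            path_subset := fun v hv => hτW v (hτ₂τ v hv)
            path_disjoint := fun v hv hvU => (hUsub hvU).2 (hτ₂τ v hv)
            path_inter_spine := fun v hv hvP => ?_ }⟩
  rcases s.mem_support_extension hyz hvP (hτW v (hτ₂τ v hv)) with hvτ₁ | rfl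
  · exact hτ₁₂ v hvτ₁ hv
  · exact absurd (hτ₂τ _ hv) (hUsub hzU).2

noncomputable def step : s.Step := Classical.choice s.nonempty_step

noncomputable def chain : ℕ → CombStage G v₀
  | 0 => s
  | n + 1 => (chain n).step.next

lemma W_chain_antitone : Antitone fun n => (s.chain n).W :=
  antitone_nat_of_succ_le fun n => (s.chain n).step.W_subset

lemma length_spine_chain_strictMono : StrictMono fun n => (s.chain n).spine.length :=
  strictMono_nat_of_lt_succ fun n => by
    change _ < (s.chain n).step.next.spine.length
    rw [(s.chain n).step.spine_eq, Walk.length_concat, Walk.length_append]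
    omega

lemma le_length_spine_chain (n : ℕ) : n ≤ (s.chain n).spine.length :=
  s.length_spine_chain_strictMono.le_apply

lemma exists_spine_chain_eq_append {m n : ℕ} (h : m ≤ n) :
    ∃ q : G.Walk (s.chain m).x (s.chain n).x,
      (s.chain n).spine = (s.chain m).spine.append q ∧ ∀ v ∈ q.support, v ∈ (s.chain m).W := by
  induction n, h using Nat.le_induction with
  | base =>
    refine ⟨.nil, (Walk.append_nil _).symm, fun v hv => ?_⟩
    rw [Walk.support_nil, List.mem_singleton] at hv
    exact hv ▸ (s.chain m).x_mem
  | succ n hmn ih =>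
    obtain ⟨q, hq, hqW⟩ := ih
    let d := (s.chain n).step
    refine ⟨q.append (d.segment.concat d.adj), ?_, fun v hv => ?_⟩
    · change d.next.spine = _
      rw [d.spine_eq, ← Walk.append_concat, hq, Walk.append_assoc]
      rfl
    · rcases (Walk.mem_support_append_iff _ _).1 hv with hv | hv
      · exact hqW v hv
      · exact s.W_chain_antitone hmn (d.mem_W_of_mem_extension hv)

lemma getVert_spine_chain_eq {m n i : ℕ} (hm : i ≤ (s.chain m).spine.length)
    (hn : i ≤ (s.chain n).spine.length) :
    (s.chain m).spine.getVert i = (s.chain n).spine.getVert i := by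
  wlog h : m ≤ n
  · exact (this s hn hm (le_of_not_ge h)).symm
  obtain ⟨q, hq, -⟩ := s.exists_spine_chain_eq_append h
  rw [hq, Walk.getVert_append', if_pos hm]

noncomputable def ray (i : ℕ) : V := (s.chain (i + 1)).spine.getVert i

lemma ray_eq {i n : ℕ} (hi : i ≤ (s.chain n).spine.length) :
    s.ray i = (s.chain n).spine.getVert i :=
  s.getVert_spine_chain_eq ((Nat.le_succ i).trans (s.le_length_spine_chain _)) hi

noncomputable def foot (n : ℕ) : ℕ := (s.chain (n + 1)).spine.length - 1

lemma ray_foot (n : ℕ) : s.ray (s.foot n) = (s.chain n).step.y := by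
  have hlen := s.le_length_spine_chain (n + 1)
  rw [foot, s.ray_eq (n := n + 1) (Nat.sub_le _ _)]
  change ((s.chain n).step.next.spine).penultimate = _
  rw [(s.chain n).step.spine_eq, Walk.penultimate_concat]

lemma eq_of_mem_path_of_mem_spine {n m : ℕ} (h : n + 1 ≤ m) {v : V}
    (hv : v ∈ (s.chain n).step.path.support) (hvm : v ∈ (s.chain m).spine.support) :
    v = (s.chain n).step.y := by
  obtain ⟨q, hq, hqW⟩ := s.exists_spine_chain_eq_append h
  rw [hq, Walk.mem_support_append_iff] at hvm
  exact hvm.elim ((s.chain n).step.path_inter_spine v hv)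
    fun hvq => absurd (hqW v hvq) ((s.chain n).step.path_disjoint v hv)

lemma path_disjoint_of_lt {m n : ℕ} (h : m < n) {v : V}
    (hvm : v ∈ (s.chain m).step.path.support) : v ∉ (s.chain n).step.path.support := fun hvn =>
  (s.chain m).step.path_disjoint v hvm
    (s.W_chain_antitone h ((s.chain n).step.path_subset v hvn))

noncomputable def comb : G.Comb (Vstar G) where
  ray := s.ray
  foot := s.foot
  tooth n := (s.chain n).step.tooth
  path n := (s.chain n).step.path.copy (s.ray_foot n).symm rfl
  ray_injective i j hij := by
    have hi := (Nat.le_add_right i j).trans (s.le_length_spine_chain (i + j))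
    have hj := (Nat.le_add_left j i).trans (s.le_length_spine_chain (i + j))
    rw [s.ray_eq hi, s.ray_eq hj] at hij
    exact (s.chain (i + j)).spine_isPath.getVert_injOn hi hj hij
  ray_adj i := by
    have hlen := s.le_length_spine_chain (i + 2)
    rw [s.ray_eq (n := i + 2) (by omega), s.ray_eq (n := i + 2) (by omega)]
    exact Walk.adj_getVert_succ _ (by omega)
  foot_strictMono m n h := by
    have hlt : (s.chain (m + 1)).spine.length < (s.chain (n + 1)).spine.length :=
      s.length_spine_chain_strictMono (Nat.succ_lt_succ h)
    have := s.le_length_spine_chain (m + 1)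
    unfold foot
    omega
  tooth_mem n := (s.chain n).step.tooth_mem
  path_isPath n := by simpa only [Walk.isPath_copy] using (s.chain n).step.path_isPath
  path_disjoint m n h v := by
    simp only [Walk.support_copy]
    rcases h.lt_or_gt with h | h
    · exact s.path_disjoint_of_lt h
    · exact fun hvm hvn => s.path_disjoint_of_lt h hvn hvm
  path_inter_ray n v hv := fun ⟨i, hi⟩ => by
    rw [Walk.support_copy] at hv
    have hlen := (Nat.le_add_right i (n + 1)).trans (s.le_length_spine_chain (i + (n + 1)))
    rw [s.eq_of_mem_path_of_mem_spine (Nat.le_add_left _ i) hv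
      (hi ▸ s.ray_eq hlen ▸ Walk.getVert_mem_support _ _), s.ray_foot]

end CombStage

lemma nonempty_comb_vstar_of_not_inSchmidtClosure [Countable V]
    (hG : ¬ InSchmidtClosure Wclass G) :
    Nonempty (G.Comb (Vstar G)) := by
  have huniv : ¬ InSchmidtClosure Wclass (G.induce univ) :=
    fun h => hG (h.of_iso wclass_isIsoInvariant (induceUnivIso G))
  obtain ⟨U, hUsub, hUconn, hUclosed, hUbad⟩ :=
    exists_connected_not_inSchmidtClosure huniv finite_empty
  obtain ⟨⟨v₀, hv₀⟩⟩ := hUconn.nonempty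
  let s : CombStage G v₀ :=
    { W := U
      F := ∅ ∪ ∅
      x := v₀
      spine := .nil
      finite_F := finite_empty.union finite_empty
      outerBoundarySubset := OuterBoundarySubset.of_subset_closed
        (fun _ _ _ _ => Or.inl (mem_univ _)) (fun v hv => (hUsub hv).1) hUclosed
      preconnected := hUconn.preconnected
      not_inSchmidtClosure := hUbad
      x_mem := hv₀
      spine_isPath := .nil
      eq_of_mem_spine := fun v hv _ => by rwa [Walk.support_nil, List.mem_singleton] at hv }
  exact ⟨s.comb⟩

end CombConstruction

/-- A countable graph lies in the Schmidt closure of 𝒲 iff it contains no comb with all its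
teeth in `V*(G)`. -/
theorem countable_inSchmidtClosure_Wclass_iff {V : Type u} [Countable V] (G : SimpleGraph V) :
    InSchmidtClosure Wclass.{u} G ↔ ¬ HasCombWithTeethIn G (Vstar G) := by
  rw [hasCombWithTeethIn_iff, not_nonempty_iff]
  refine ⟨fun ⟨μ, hμ⟩ => isEmpty_comb_vstar_of_schmidtLevel_wclass μ hμ, fun h => ?_⟩
  by_contra hG
  exact (nonempty_comb_vstar_of_not_inSchmidtClosure hG).elim h.false
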